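/- Let α = log₉(96·3^(1/3)) and λ = 2·3^(1/3). Let p be a prime and let k, e, b, a be positive integers with a ≤ e^(2α)/λ, and set w = p^k. Let G be a finite group acting on a finite set V with |V| = w^(e·b), and suppose there is a point v₀ ∈ V fixed by every element of G and that |G| divides k·a·e²·(w − 1). Then the number of orbits of G on V is at least ⌈λ·(w^e − 1)/(log₂(w)·e^(2α+2)·(w − 1))⌉ + 1. -/

import Mathlib

/-!
The orbit of the fixed point `v₀` is a singleton and every other orbit has at most `|G|` points,
so `|V| - 1 ≤ (N - 1) |G|`, where `N` is the number of orbits. With `w = p ^ k`, the hypotheses give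
`|G| ≤ k a e² (w - 1)`, `k ≤ log₂ w` and `λ a ≤ e ^ (2α)`, while `|V| = w ^ (e b) ≥ w ^ e`;
together these bound `(|V| - 1) / |G|` from below by the displayed quotient.
-/

open MulAction Finset

namespace MulAction

variable {G V : Type*} [Group G] [MulAction G V]

theorem card_orbit_le_card_group [Finite G] (ω : orbitRel.Quotient G V) :
    Nat.card ω.orbit ≤ Nat.card G := by
  induction ω using Quotient.inductionOn' with
  | h v => rw [orbitRel.Quotient.orbit_mk]; exact Finite.card_range_le _

theorem card_orbit_eq_one_of_mem_fixedPoints {v : V} (hv : v ∈ fixedPoints G V) :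
    Nat.card (orbitRel.Quotient.orbit (Quotient.mk'' v : orbitRel.Quotient G V)) = 1 := by
  rw [orbitRel.Quotient.orbit_mk, Nat.card_eq_one_iff_unique, Set.subsingleton_coe,
    subsingleton_orbit_iff_mem_fixedPoints]
  exact ⟨hv, (nonempty_orbit v).to_subtype⟩

theorem card_le_one_add_card_orbitRel_quotient_sub_one_mul [Finite G] [Finite V] {v₀ : V}
    (hv₀ : v₀ ∈ fixedPoints G V) :
    Nat.card V ≤ 1 + (Nat.card (orbitRel.Quotient G V) - 1) * Nat.card G := by
  classical
  have := Fintype.ofFinite (orbitRel.Quotient G V)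
  let ω₀ : orbitRel.Quotient G V := Quotient.mk'' v₀
  calc Nat.card V = ∑ ω : orbitRel.Quotient G V, Nat.card ω.orbit := by
        rw [Nat.card_congr (selfEquivSigmaOrbits' G V), Nat.card_sigma]
    _ = 1 + ∑ ω ∈ univ.erase ω₀, Nat.card ω.orbit := by
        rw [← add_sum_erase _ _ (mem_univ ω₀), card_orbit_eq_one_of_mem_fixedPoints hv₀]
    _ ≤ 1 + (Nat.card (orbitRel.Quotient G V) - 1) * Nat.card G := by
        grw [sum_le_card_nsmul _ _ _ fun ω _ ↦ card_orbit_le_card_group ω]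
        rw [card_erase_of_mem (mem_univ _), card_univ, ← Nat.card_eq_fintype_card, smul_eq_mul]

theorem card_sub_one_div_card_le_card_orbitRel_quotient_sub_one [Finite G] [Finite V] {v₀ : V}
    (hv₀ : v₀ ∈ fixedPoints G V) :
    ((Nat.card V : ℝ) - 1) / Nat.card G ≤ Nat.card (orbitRel.Quotient G V) - 1 := by
  have hN : 1 ≤ Nat.card (orbitRel.Quotient G V) :=
    Nat.one_le_iff_ne_zero.mpr (Nat.card_ne_zero.mpr ⟨⟨Quotient.mk'' v₀⟩, inferInstance⟩)
  rw [div_le_iff₀ (by exact_mod_cast Nat.card_pos), sub_le_iff_le_add', ← Nat.cast_one,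
    ← Nat.cast_sub hN]
  exact_mod_cast card_le_one_add_card_orbitRel_quotient_sub_one_mul hv₀

end MulAction

theorem Real.natCast_le_logb_two_pow {p : ℕ} (hp : 2 ≤ p) (k : ℕ) :
    (k : ℝ) ≤ Real.logb 2 ((p : ℝ) ^ k) := by
  rw [Real.le_logb_iff_rpow_le one_lt_two (by positivity), Real.rpow_natCast]
  exact pow_le_pow_left₀ zero_le_two (by exact_mod_cast hp) k

theorem mul_div_logb_mul_rpow_le_div {c β : ℝ} (hc : 0 < c) {p k e a : ℕ} (hp : 2 ≤ p)
    (hk : 0 < k) (he : 0 < e) (ha : 0 < a) (hca : c * a ≤ (e : ℝ) ^ β) :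
    c * (((p : ℝ) ^ k) ^ e - 1) /
        (Real.logb 2 ((p : ℝ) ^ k) * (e : ℝ) ^ (β + 2) * ((p : ℝ) ^ k - 1)) ≤
      (((p : ℝ) ^ k) ^ e - 1) / (k * a * e ^ 2 * ((p : ℝ) ^ k - 1)) := by
  have hw : 1 < (p : ℝ) ^ k := one_lt_pow₀ (by exact_mod_cast hp) hk.ne'
  have hd : 0 < (p : ℝ) ^ k - 1 := sub_pos.mpr hw
  have hnum : 0 ≤ ((p : ℝ) ^ k) ^ e - 1 := sub_nonneg.mpr (one_le_pow₀ hw.le)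
  have hL := Real.natCast_le_logb_two_pow hp k
  have hL₀ : 0 < Real.logb 2 ((p : ℝ) ^ k) := (Nat.cast_pos.mpr hk).trans_le hL
  have hlog : c * (k * a) ≤ Real.logb 2 ((p : ℝ) ^ k) * (e : ℝ) ^ β := by
    rw [mul_left_comm]
    exact mul_le_mul hL hca (mul_pos hc (by positivity)).le hL₀.le
  rw [Real.rpow_add (by positivity), Real.rpow_two,
    div_le_div_iff₀ (by positivity [hL₀, hd]) (mul_pos (by positivity) hd)]
  have := mul_le_mul_of_nonneg_right hlog (mul_nonneg (mul_nonneg hnum (sq_nonneg (e : ℝ))) hd.le)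
  linarith

/-- Equation (2.4): with `α = log₉(96·3^(1/3))`, `λ = 2·3^(1/3)` and `w = p^k`, if
`a ≤ e^(2α)/λ`, `|V| = w^(e·b)`, some point `v₀ ∈ V` is fixed by every element of `G`,
and `|G|` divides `k·a·e²·(w - 1)`, then the number of orbits of `G` on `V` is at least
`⌈λ·(w^e - 1)/(log₂(w)·e^(2α+2)·(w - 1))⌉ + 1`. -/
theorem rank_lower_bound_alpha_lambda (p k e b a : ℕ) (hp : p.Prime) (hk : 0 < k)
    (he : 0 < e) (hb : 0 < b) (ha : 0 < a)
    (hAF : (a : ℝ) ≤ (e : ℝ) ^ (2 * Real.logb 9 (96 * (3 : ℝ) ^ ((1 : ℝ) / 3))) /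
      (2 * (3 : ℝ) ^ ((1 : ℝ) / 3)))
    (G V : Type*) [Group G] [Finite G] [Finite V] [MulAction G V]
    (hV : Nat.card V = (p ^ k) ^ (e * b))
    (v₀ : V) (hfix : ∀ g : G, g • v₀ = v₀)
    (hdvd : Nat.card G ∣ k * a * e ^ 2 * (p ^ k - 1)) :
    (⌈(2 * (3 : ℝ) ^ ((1 : ℝ) / 3)) * (((p : ℝ) ^ k) ^ e - 1) /
        (Real.logb 2 ((p : ℝ) ^ k) *
          (e : ℝ) ^ (2 * Real.logb 9 (96 * (3 : ℝ) ^ ((1 : ℝ) / 3)) + 2) *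
          ((p : ℝ) ^ k - 1))⌉ + 1 : ℤ) ≤
      Nat.card (MulAction.orbitRel.Quotient G V) := by
  have hw : 1 < p ^ k := Nat.one_lt_pow hk.ne' hp.one_lt
  have hG : (Nat.card G : ℝ) ≤ k * a * e ^ 2 * ((p : ℝ) ^ k - 1) := by
    have h := Nat.cast_le (α := ℝ) |>.mpr <|
      Nat.le_of_dvd (Nat.mul_pos (by positivity) (Nat.sub_pos_of_lt hw)) hdvd
    push_cast [Nat.cast_sub hw.le] at h
    exact h
  have hca := (le_div_iff₀' (by positivity)).mp hAF
  rw [← le_sub_iff_add_le, Int.ceil_le, Int.cast_sub, Int.cast_natCast, Int.cast_one]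
  calc _ ≤ (((p : ℝ) ^ k) ^ e - 1) / (k * a * e ^ 2 * ((p : ℝ) ^ k - 1)) :=
        mul_div_logb_mul_rpow_le_div (by positivity) hp.two_le hk he ha hca
    _ ≤ ((Nat.card V : ℝ) - 1) / Nat.card G := by
        rw [hV]
        push_cast
        have hwR : (1 : ℝ) ≤ (p : ℝ) ^ k := by exact_mod_cast hw.le
        gcongr
        · exact sub_nonneg.mpr (one_le_pow₀ hwR)
        · exact Nat.cast_pos.mpr Nat.card_pos
        · exact Nat.le_mul_of_pos_right e hb
    _ ≤ _ := MulAction.card_sub_one_div_card_le_card_orbitRel_quotient_sub_one hfix
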